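/- arXiv:2412.20291 — 3 statements merged into one kernel-verified Lean document; each statement's English description precedes it below -/
import Mathlib

section
/- Let B(a, r) ⊆ B(0, R) ⊆ R^d. Every affine map (A, x₀) with φ(B(a,r)) ⊆ B(0,R) satisfies sqrt(‖A‖_F² + ‖x₀‖₂²) ≤ (3R/r)·sqrt(R² + d). Hence Lin(B(a,r) → B(0,R)), viewed as a subset of R^{d×(d+1)}, is contained in a ball of radius (3R/r)·sqrt(R²+d) around the origin. -/
/-- The Frobenius norm of a square real matrix. -/
noncomputable def frobNorm {d : ℕ} (A : Matrix (Fin d) (Fin d) ℝ) : ℝ :=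
  Real.sqrt (∑ i, ∑ j, (A i j) ^ 2)

/-!
The linear part `L` of an affine map sending `B(a, r)` into `B(0, R)` sends every `w` with
`‖w‖ ≤ r` to the difference of the images of `a + w` and `a`, so `‖L w‖ ≤ 2R` and hence
`‖L‖ ≤ 2R/r`. Each of the `d` columns of `A` then has norm at most `2R/r`, and
`x₀ = φ(a) - L a` has norm at most `R + 2R²/r ≤ 3R²/r`, because `r ≤ R` as soon as `d ≥ 1`.
-/

open Metric

lemma Metric.radius_le_of_closedBall_subset {E : Type*} [NormedAddCommGroup E] [NormedSpace ℝ E]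
    [Nontrivial E] {a b : E} {r R : ℝ} (hr : 0 ≤ r) (h : closedBall a r ⊆ closedBall b R) :
    r ≤ R := by
  have hR : 0 ≤ R := dist_nonneg.trans (h (mem_closedBall_self hr))
  have hdiam := (diam_mono h isBounded_closedBall).trans (diam_closedBall hR)
  rw [diam_closedBall_eq a hr] at hdiam
  linarith

section LinearMap

variable {E F : Type*} [NormedAddCommGroup E] [NormedSpace ℝ E] [SeminormedAddCommGroup F]
  [NormedSpace ℝ F]

lemma LinearMap.norm_apply_le_of_closedBall_bound (L : E →ₗ[ℝ] F) {r C : ℝ} (hr : 0 < r)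
    (hL : ∀ v, ‖v‖ ≤ r → ‖L v‖ ≤ C) (w : E) : ‖L w‖ ≤ C / r * ‖w‖ := by
  rcases eq_or_ne w 0 with rfl | hw
  · simp
  have hw' : 0 < ‖w‖ := norm_pos_iff.mpr hw
  have h := hL ((r / ‖w‖) • w) (by
    rw [norm_smul, Real.norm_of_nonneg (by positivity), div_mul_cancel₀ _ hw'.ne'])
  rw [map_smul, norm_smul, Real.norm_of_nonneg (by positivity), div_mul_eq_mul_div,
    div_le_iff₀ hw'] at h
  rw [div_mul_eq_mul_div, le_div_iff₀ hr]
  linarith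

lemma LinearMap.norm_apply_le_two_mul_of_mapsTo_closedBall (L : E →ₗ[ℝ] F) {a : E} {x₀ : F}
    {r R : ℝ} (hφ : ∀ x ∈ closedBall a r, L x + x₀ ∈ closedBall 0 R) {w : E} (hw : ‖w‖ ≤ r) :
    ‖L w‖ ≤ 2 * R := by
  have hr : 0 ≤ r := (norm_nonneg w).trans hw
  have h₁ := mem_closedBall_zero_iff.mp (hφ (a + w) (by simpa [dist_eq_norm] using hw))
  have h₂ := mem_closedBall_zero_iff.mp (hφ a (mem_closedBall_self hr))
  calc ‖L w‖ = ‖(L (a + w) + x₀) - (L a + x₀)‖ := by rw [map_add]; abel_nf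
    _ ≤ 2 * R := by linarith [norm_sub_le (L (a + w) + x₀) (L a + x₀)]

lemma LinearMap.norm_le_add_norm_apply_of_mapsTo_closedBall (L : E →ₗ[ℝ] F) {a : E} {x₀ : F}
    {r R : ℝ} (hr : 0 ≤ r) (hφ : ∀ x ∈ closedBall a r, L x + x₀ ∈ closedBall 0 R) :
    ‖x₀‖ ≤ R + ‖L a‖ :=
  calc ‖x₀‖ = ‖(L a + x₀) - L a‖ := by abel_nf
    _ ≤ R + ‖L a‖ := by
      grw [norm_sub_le, mem_closedBall_zero_iff.mp (hφ a (mem_closedBall_self hr))]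

end LinearMap

lemma frobNorm_sq_eq_sum_norm_sq {d : ℕ} (A : Matrix (Fin d) (Fin d) ℝ) :
    frobNorm A ^ 2 = ∑ j, ‖Matrix.toEuclideanLin A (EuclideanSpace.single j 1)‖ ^ 2 := by
  rw [frobNorm, Real.sq_sqrt (by positivity), Finset.sum_comm]
  refine Finset.sum_congr rfl fun j _ => ?_
  simp [EuclideanSpace.norm_sq_eq]

lemma frobNorm_sq_le_of_norm_apply_le {d : ℕ} (A : Matrix (Fin d) (Fin d) ℝ) {C : ℝ}
    (hA : ∀ w, ‖Matrix.toEuclideanLin A w‖ ≤ C * ‖w‖) : frobNorm A ^ 2 ≤ d * C ^ 2 := by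
  rw [frobNorm_sq_eq_sum_norm_sq]
  calc ∑ j, ‖Matrix.toEuclideanLin A (EuclideanSpace.single j 1)‖ ^ 2
      ≤ ∑ _j : Fin d, C ^ 2 := Finset.sum_le_sum fun j _ => by
        gcongr
        simpa using hA (EuclideanSpace.single j 1)
    _ = d * C ^ 2 := by simp

/-- if `B(a,r) ⊆ B(0,R)` and the affine map `(A, x₀)` maps `B(a,r)` into
`B(0,R)`, then `sqrt(‖A‖_F² + ‖x₀‖²) ≤ (3R/r)·sqrt(R² + d)`; i.e. `Lin(B(a,r) → B(0,R))`
is contained in the ball of that radius around the origin of `ℝ^{d×(d+1)}`. -/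
theorem frobenius_bound_of_mapsTo_balls {d : ℕ} (a : EuclideanSpace ℝ (Fin d)) (r R : ℝ)
    (hr : 0 < r)
    (hsub : Metric.closedBall a r ⊆ Metric.closedBall (0 : EuclideanSpace ℝ (Fin d)) R)
    (A : Matrix (Fin d) (Fin d) ℝ) (x₀ : EuclideanSpace ℝ (Fin d))
    (hφ : ∀ x ∈ Metric.closedBall a r,
      Matrix.toEuclideanLin A x + x₀ ∈ Metric.closedBall (0 : EuclideanSpace ℝ (Fin d)) R) :
    Real.sqrt (frobNorm A ^ 2 + ‖x₀‖ ^ 2) ≤ (3 * R / r) * Real.sqrt (R ^ 2 + d) := by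
  set L := Matrix.toEuclideanLin A
  have haR : ‖a‖ ≤ R := by simpa using hsub (mem_closedBall_self hr.le)
  have hR : 0 ≤ R := (norm_nonneg a).trans haR
  have hL (w) : ‖L w‖ ≤ 2 * R / r * ‖w‖ := L.norm_apply_le_of_closedBall_bound hr
    (fun _ hv => L.norm_apply_le_two_mul_of_mapsTo_closedBall hφ hv) w
  have hA : frobNorm A ^ 2 ≤ d * (2 * R / r) ^ 2 := frobNorm_sq_le_of_norm_apply_le A hL
  have hx₀ : ‖x₀‖ ≤ 3 * R ^ 2 / r := by
    rcases subsingleton_or_nontrivial (EuclideanSpace ℝ (Fin d)) with _ | _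
    · rw [Subsingleton.elim x₀ 0, norm_zero]; positivity
    have hrR : r ≤ R := radius_le_of_closedBall_subset hr.le hsub
    calc ‖x₀‖ ≤ R + ‖L a‖ := L.norm_le_add_norm_apply_of_mapsTo_closedBall hr.le hφ
      _ ≤ R + 2 * R / r * R := by grw [hL a, haR]
      _ ≤ R * R / r + 2 * R / r * R := by
        gcongr
        rw [le_div_iff₀ hr]
        exact mul_le_mul_of_nonneg_left hrR hR
      _ = 3 * R ^ 2 / r := by ring
  rw [← Real.sqrt_sq (by positivity : 0 ≤ 3 * R / r), ← Real.sqrt_mul (sq_nonneg _)]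
  gcongr
  calc frobNorm A ^ 2 + ‖x₀‖ ^ 2 ≤ d * (2 * R / r) ^ 2 + (3 * R ^ 2 / r) ^ 2 := by gcongr
    _ ≤ d * (3 * R / r) ^ 2 + (3 * R ^ 2 / r) ^ 2 := by gcongr; norm_num
    _ = (3 * R / r) ^ 2 * (R ^ 2 + d) := by ring
end

section
/- Let P ⊆ R^d be compact and convex, and let φ : R^d → R^d be an affine map. Let p* ∈ P minimize f(p) = ‖φ(p) − p‖² over P. If f(p*) > 0, then for every p ∈ P one has ⟨φ(p) − p, φ(p*) − p*⟩ > 0. -/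
open scoped RealInnerProductSpace

/-- if `p*` minimizes `f(p) = ‖φ(p) - p‖²` over the compact convex set `P`
and `f(p*) > 0`, then `⟨φ(p) - p, φ(p*) - p*⟩ > 0` for every `p ∈ P`. -/
theorem inner_pos_of_min_not_fixed {d : ℕ} (P : Set (EuclideanSpace ℝ (Fin d)))
    (hPc : IsCompact P) (hPv : Convex ℝ P)
    (φ : EuclideanSpace ℝ (Fin d) →ᵃ[ℝ] EuclideanSpace ℝ (Fin d))
    (pstar : EuclideanSpace ℝ (Fin d)) (hps : pstar ∈ P)
    (hmin : ∀ p ∈ P, ‖φ pstar - pstar‖ ^ 2 ≤ ‖φ p - p‖ ^ 2)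
    (hpos : 0 < ‖φ pstar - pstar‖ ^ 2) :
    ∀ p ∈ P, 0 < ⟪φ p - p, φ pstar - pstar⟫ := by
  intro p hp
  set v := φ pstar - pstar with hv
  set w := φ p - p with hw
  set a := ⟪v, w - v⟫ with ha
  set c := ‖w - v‖ ^ 2 with hc
  have hcnn : 0 ≤ c := by positivity
  have key : ∀ t : ℝ, 0 ≤ t → t ≤ 1 → 0 ≤ 2 * a * t + c * t ^ 2 := by
    intro t ht0 ht1
    have hmem : pstar + t • (p - pstar) ∈ P := by
      have := hPv hps hp (by linarith : (0:ℝ) ≤ 1 - t) ht0 (by ring)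
      convert this using 1
      simp [smul_sub, sub_smul]
      abel
    have hφ : φ (pstar + t • (p - pstar)) = φ pstar + t • (φ p - φ pstar) := by
      have h := φ.apply_lineMap pstar p t
      simp only [AffineMap.lineMap_apply, vsub_eq_sub, vadd_eq_add] at h
      rw [show pstar + t • (p - pstar) = t • (p - pstar) + pstar from add_comm _ _, h,
        add_comm]
    have hmin' := hmin _ hmem
    have heq : φ (pstar + t • (p - pstar)) - (pstar + t • (p - pstar)) = v + t • (w - v) := by
      rw [hφ, hv, hw]
      simp [smul_sub]
      abel
    rw [heq] at hmin'
    have hexp : ‖v + t • (w - v)‖ ^ 2 = ‖v‖ ^ 2 + 2 * a * t + c * t ^ 2 := by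
      rw [@norm_add_sq_real]
      rw [real_inner_smul_right, norm_smul]
      simp [ha, hc, mul_pow]
      ring
    rw [hexp] at hmin'
    linarith
  have hanneg : 0 ≤ a := by
    by_contra hneg
    push_neg at hneg
    rcases eq_or_lt_of_le hcnn with hc0 | hcpos
    · have := key 1 zero_le_one le_rfl
      nlinarith
    · set t := min 1 (-a / c) with htdef
      have ht0 : 0 < t := lt_min one_pos (div_pos (by linarith) hcpos)
      have ht1 : t ≤ 1 := min_le_left _ _
      have htc : c * t ≤ -a := by
        have : t ≤ -a / c := min_le_right _ _
        calc c * t ≤ c * (-a / c) := mul_le_mul_of_nonneg_left this hcpos.le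
          _ = -a := by field_simp
      have hk := key t ht0.le ht1
      nlinarith
  have h1 : a = ⟪v, w⟫ - ⟪v, v⟫ := by rw [ha, inner_sub_right]
  have h2 : ⟪v, v⟫ = ‖v‖ ^ 2 := real_inner_self_eq_norm_sq v
  have : ⟪v, w⟫ = a + ‖v‖ ^ 2 := by rw [h1, h2]; ring
  have hfin : 0 < ⟪v, w⟫ := by rw [this]; linarith
  rwa [real_inner_comm] at hfin
end

section
/- Let P ⊆ R^d be compact and convex, φ : R^d → R^d affine with no fixed point in P. Let p* minimize ‖φ(p) − p‖² over P, set u = φ(p*) − p*, and let p_u ∈ P maximize ⟨p, u⟩ over P. Then (a) every affine endomorphism φ' of P satisfies ⟨φ'(p_u), u⟩ ≤ ⟨p_u, u⟩, while (b) ⟨φ(p_u), u⟩ > ⟨p_u, u⟩. Hence the linear functional ψ ↦ ⟨ψ(p_u), u⟩ strictly separates φ from the set Φ(P) of affine endomorphisms of P. -/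
open scoped RealInnerProductSpace

/-- semi-separation: let `φ` be an affine map with no fixed point in the
compact convex set `P`, let `p*` minimize `‖φ(p) - p‖` over `P`, let `u = φ(p*) - p*`, and
let `p_u` maximize `⟨p, u⟩` over `P`.  Then (a) every affine endomorphism `φ'` of `P`
satisfies `⟨φ'(p_u), u⟩ ≤ ⟨p_u, u⟩`, while (b) `⟨φ(p_u), u⟩ > ⟨p_u, u⟩`. -/
theorem semi_separation {d : ℕ} (P : Set (EuclideanSpace ℝ (Fin d)))
    (hPc : IsCompact P) (hPv : Convex ℝ P)
    (φ : EuclideanSpace ℝ (Fin d) →ᵃ[ℝ] EuclideanSpace ℝ (Fin d))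
    (hnofix : ∀ p ∈ P, φ p ≠ p)
    (pstar : EuclideanSpace ℝ (Fin d)) (hps : pstar ∈ P)
    (hmin : ∀ p ∈ P, ‖φ pstar - pstar‖ ≤ ‖φ p - p‖)
    (pu : EuclideanSpace ℝ (Fin d)) (hpu : pu ∈ P)
    (hmax : ∀ p ∈ P, ⟪p, φ pstar - pstar⟫ ≤ ⟪pu, φ pstar - pstar⟫) :
    (∀ φ' : EuclideanSpace ℝ (Fin d) →ᵃ[ℝ] EuclideanSpace ℝ (Fin d),
        Set.MapsTo φ' P P → ⟪φ' pu, φ pstar - pstar⟫ ≤ ⟪pu, φ pstar - pstar⟫) ∧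
      ⟪pu, φ pstar - pstar⟫ < ⟪φ pu, φ pstar - pstar⟫ := by
  set u : EuclideanSpace ℝ (Fin d) := φ pstar - pstar with hu
  have hune : u ≠ 0 := sub_ne_zero.mpr (hnofix pstar hps)
  have hupos : (0:ℝ) < ‖u‖ ^ 2 := pow_pos (norm_pos_iff.mpr hune) 2
  have key : ∀ p ∈ P, ‖u‖ ^ 2 ≤ ⟪u, φ p - p⟫ := by
    intro p hp
    set v : EuclideanSpace ℝ (Fin d) := (φ p - p) - u with hv
    have ht : ∀ t : ℝ, 0 ≤ t → t ≤ 1 → (0:ℝ) ≤ 2 * t * ⟪u, v⟫ + t ^ 2 * ‖v‖ ^ 2 := by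
      intro t ht0 ht1
      have hq : (1 - t) • pstar + t • p ∈ P := hPv hps hp (by linarith) ht0 (by ring)
      have hφq : φ ((1 - t) • pstar + t • p) = (1 - t) • φ pstar + t • φ p :=
        Convex.combo_affine_apply (by ring)
      have hd : φ ((1 - t) • pstar + t • p) - ((1 - t) • pstar + t • p) = u + t • v := by
        rw [hφq, hu, hv]
        module
      have hle : ‖u‖ ≤ ‖u + t • v‖ := by
        have := hmin _ hq
        rwa [hd] at this
      have hsq : ‖u‖ ^ 2 ≤ ‖u + t • v‖ ^ 2 := by
        have := mul_self_le_mul_self (norm_nonneg u) hle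
        nlinarith
      have hexp : ‖u + t • v‖ ^ 2 = ‖u‖ ^ 2 + 2 * t * ⟪u, v⟫ + t ^ 2 * ‖v‖ ^ 2 := by
        rw [@norm_add_sq_real, real_inner_smul_right, norm_smul]
        simp [mul_pow, abs_mul_abs_self]
        ring
      nlinarith [hsq, hexp]
    have huv : (0:ℝ) ≤ ⟪u, v⟫ := by
      by_contra h
      push_neg at h
      have hvne : v ≠ 0 := by
        intro h0
        rw [h0] at h
        simp at h
      have hvpos : (0:ℝ) < ‖v‖ ^ 2 := pow_pos (norm_pos_iff.mpr hvne) 2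
      set t : ℝ := min 1 (-⟪u, v⟫ / ‖v‖ ^ 2) with htdef
      have ht0 : 0 < t := lt_min one_pos (div_pos (by linarith) hvpos)
      have ht1 : t ≤ 1 := min_le_left _ _
      have htv : t * ‖v‖ ^ 2 ≤ -⟪u, v⟫ := by
        have : t ≤ -⟪u, v⟫ / ‖v‖ ^ 2 := min_le_right _ _
        calc t * ‖v‖ ^ 2 ≤ (-⟪u, v⟫ / ‖v‖ ^ 2) * ‖v‖ ^ 2 := by
              exact mul_le_mul_of_nonneg_right this (le_of_lt hvpos)
          _ = -⟪u, v⟫ := by field_simp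
      have := ht t ht0.le ht1
      nlinarith
    have : ⟪u, φ p - p⟫ = ‖u‖ ^ 2 + ⟪u, v⟫ := by
      rw [hv, inner_sub_right (𝕜 := ℝ), inner_sub_right (𝕜 := ℝ),
        inner_sub_right (𝕜 := ℝ), real_inner_self_eq_norm_sq]
      ring
    linarith
  constructor
  · intro φ' hφ'
    exact hmax _ (hφ' hpu)
  · have h := key pu hpu
    have : ⟪u, φ pu - pu⟫ = ⟪φ pu, u⟫ - ⟪pu, u⟫ := by
      rw [inner_sub_right, real_inner_comm u (φ pu), real_inner_comm u pu]
    rw [this] at h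
    rw [hu] at h ⊢
    linarith
end
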